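/- Let Ω ⊂ ℝ^d be open bounded, and consider u ∈ C([0,T]; C²(Ω̄)) ∩ C¹((0,T]; C(Ω̄)) solving ∂_t u − div(q∇u) = f in Ω×(0,T], u = 0 on ∂Ω×(0,T], u(0) = u₀, with q ∈ C¹(Ω̄), q ≥ c₀ > 0. Assume: f ≥ c_f > 0 and ∂_t f ≤ 0 in Ω×(0,T]; u₀ ≥ 0 in Ω; and f(·,0) + div(q∇u₀) ≤ 0 in Ω. Then u(x,t) ≥ 0 and ∂_t u(x,t) ≤ 0 for all (x,t) ∈ Ω̄ × [0,T], and consequently q(x)|∇u(x,t)|² + (f(x,t) − ∂_t u(x,t)) u(x,t) ≥ min(c₀, c_f)(|∇u(x,t)|² + u(x,t)) for all (x,t). -/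

import Mathlib

/-!
At an interior positive maximum of a strict subsolution of `∂ₜv - div (q ∇v) < 0` (with `q ≥ 0`),
the one-sided time derivative is `≥ 0` and `div (q ∇v) = q Δv ≤ 0` because `∇v` vanishes there;
perturbing by `ε (t - a)` turns this into the comparison principle. Comparing `u` with `0` gives
`u ≥ 0`, and comparing it with the stationary supersolution `u₀` gives `u ≤ u(0)`. As `f` decreases
in time, `u(· + h)` solves the same equation with a smaller right-hand side and initial value
`u(h) ≤ u(0)`, so `u(t + h) ≤ u(t)`: this yields `∂ₜu ≤ 0` without differentiating the equation in
time. The final inequality is then elementary.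
-/

open MeasureTheory Set

/-- Divergence of a vector field on Euclidean space. -/
noncomputable def ediv {d : ℕ}
    (V : EuclideanSpace ℝ (Fin d) → EuclideanSpace ℝ (Fin d))
    (x : EuclideanSpace ℝ (Fin d)) : ℝ :=
  ∑ i, fderiv ℝ V x (EuclideanSpace.single i 1) i

open Filter Topology InnerProductSpace

theorem HasDerivWithinAt.nonneg_of_isLocalMaxOn_Icc {p : ℝ → ℝ} {p' a b t : ℝ}
    (hp : HasDerivWithinAt p p' (Icc a b) t) (hmax : IsLocalMaxOn p (Icc a b) t)
    (ht : t ∈ Ioc a b) : 0 ≤ p' := by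
  have hcone : a - t ∈ posTangentConeAt (Icc a b) t :=
    sub_mem_posTangentConeAt_of_segment_subset
      ((convex_Icc a b).segment_subset ⟨ht.1.le, ht.2⟩ ⟨le_rfl, ht.1.le.trans ht.2⟩)
  have h := hmax.hasFDerivWithinAt_nonpos hp.hasFDerivWithinAt hcone
  simp only [ContinuousLinearMap.toSpanSingleton_apply, smul_eq_mul] at h
  exact nonneg_of_mul_nonpos_right h (sub_neg.2 ht.1)

theorem IsLocalMax.nonpos_of_hasDerivAt_deriv {g g' : ℝ → ℝ} {x c : ℝ} (hmax : IsLocalMax g x)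
    (hg : ∀ᶠ s in 𝓝 x, HasDerivAt g (g' s) s) (hg' : HasDerivAt g' c x) : c ≤ 0 := by
  -- if `c > 0`, then `g' > 0` just right of `x` and the mean value theorem contradicts maximality
  by_contra! hc
  have hsign := eventually_nhdsWithin_sign_eq_of_deriv_pos (hg'.deriv ▸ hc)
    (hmax.hasDerivAt_eq_zero hg.self_of_nhds)
  obtain ⟨s, hxs, hs⟩ := mem_nhdsGT_iff_exists_Ioc_subset.1
    (nhdsWithin_le_nhds (hsign.and (hg.and hmax)))
  have hcont : ContinuousOn g (Icc x s) := by
    intro r hr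
    rcases hr.1.eq_or_lt with rfl | hxr
    · exact hg.self_of_nhds.continuousAt.continuousWithinAt
    · exact (hs ⟨hxr, hr.2⟩).2.1.continuousAt.continuousWithinAt
  obtain ⟨ξ, hξ, hslope⟩ := exists_hasDerivAt_eq_slope g g' (mem_Ioi.1 hxs) hcont
    (fun r hr => (hs (Ioo_subset_Ioc_self hr)).2.1)
  have hpos : 0 < g' ξ := by
    have := (hs (Ioo_subset_Ioc_self hξ)).1
    rwa [sign_pos (sub_pos.2 hξ.1), sign_eq_one_iff] at this
  have hle : g s ≤ g x := (hs ⟨hxs, le_rfl⟩).2.2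
  rw [hslope] at hpos
  exact (div_nonpos_of_nonpos_of_nonneg (sub_nonpos.2 hle) (sub_nonneg.2 hxs.le)).not_gt hpos

theorem antitoneOn_Icc_of_hasDerivWithinAt_nonpos {g g' : ℝ → ℝ} {a b : ℝ}
    (hg : ∀ t ∈ Icc a b, HasDerivWithinAt g (g' t) (Icc a b) t) (hg' : ∀ t ∈ Ioc a b, g' t ≤ 0) :
    AntitoneOn g (Icc a b) := by
  refine antitoneOn_of_hasDerivWithinAt_nonpos (f' := g') (convex_Icc a b)
    (fun t ht => (hg t ht).continuousWithinAt) (fun t ht => ?_) (fun t ht => ?_)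
  · rw [interior_Icc] at ht ⊢
    exact (hg t (Ioo_subset_Icc_self ht)).mono Ioo_subset_Icc_self
  · rw [interior_Icc] at ht
    exact hg' t (Ioo_subset_Ioc_self ht)

section Gradient

variable {𝕜 F : Type*} [RCLike 𝕜] [NormedAddCommGroup F] [InnerProductSpace 𝕜 F] [CompleteSpace F]
  {f g : F → 𝕜} {x : F}

theorem gradient_fun_sub (hf : DifferentiableAt 𝕜 f x) (hg : DifferentiableAt 𝕜 g x) :
    gradient (fun y => f y - g y) x = gradient f x - gradient g x := by
  simp only [gradient, fderiv_fun_sub hf hg, map_sub]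

theorem gradient_sub_const (c : 𝕜) : gradient (fun y => f y - c) = gradient f := by
  ext1 y
  simp only [gradient, fderiv_sub_const]

end Gradient

theorem ContDiffAt.differentiableAt_gradient {F : Type*} [NormedAddCommGroup F]
    [InnerProductSpace ℝ F] [CompleteSpace F] {f : F → ℝ} {x : F} (hf : ContDiffAt ℝ 2 f x) :
    DifferentiableAt ℝ (gradient f) x :=
  (toDual ℝ F).symm.differentiableAt.comp x
    ((hf.fderiv_right (m := 1) (by norm_num)).differentiableAt one_ne_zero)

section Divergence

variable {d : ℕ} {q v w : EuclideanSpace ℝ (Fin d) → ℝ}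
  {V W : EuclideanSpace ℝ (Fin d) → EuclideanSpace ℝ (Fin d)} {x : EuclideanSpace ℝ (Fin d)}

theorem fderiv_single_eq_gradient_apply (y : EuclideanSpace ℝ (Fin d)) (i : Fin d) :
    fderiv ℝ v y (EuclideanSpace.single i 1) = gradient v y i := by
  rw [← inner_gradient_left, EuclideanSpace.inner_single_right]
  simp

theorem Filter.EventuallyEq.ediv_eq (h : V =ᶠ[𝓝 x] W) : ediv V x = ediv W x := by
  rw [ediv, ediv, h.fderiv_eq]

theorem ediv_const (c : EuclideanSpace ℝ (Fin d)) : ediv (fun _ => c) x = 0 := by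
  simp [ediv]

theorem ediv_sub (hV : DifferentiableAt ℝ V x) (hW : DifferentiableAt ℝ W x) :
    ediv (fun y => V y - W y) x = ediv V x - ediv W x := by
  simp only [ediv, fderiv_fun_sub hV hW, sub_apply, PiLp.sub_apply,
    Finset.sum_sub_distrib]

theorem ediv_smul_of_eq_zero (hq : DifferentiableAt ℝ q x) (hV : DifferentiableAt ℝ V x)
    (hV0 : V x = 0) : ediv (fun y => q y • V y) x = q x * ediv V x := by
  simp [ediv, fderiv_fun_smul hq hV, hV0, Finset.mul_sum]

theorem ediv_smul_gradient_sub (hq : DifferentiableAt ℝ q x) (hv : ContDiffAt ℝ 2 v x)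
    (hw : ContDiffAt ℝ 2 w x) :
    ediv (fun y => q y • gradient (fun z => v z - w z) y) x =
      ediv (fun y => q y • gradient v y) x - ediv (fun y => q y • gradient w y) x := by
  have hsub : (fun y => q y • gradient (fun z => v z - w z) y) =ᶠ[𝓝 x]
      fun y => q y • gradient v y - q y • gradient w y := by
    filter_upwards [hv.eventually (by simp), hw.eventually (by simp)] with y hvy hwy
    rw [gradient_fun_sub (hvy.differentiableAt (by simp)) (hwy.differentiableAt (by simp)),
      smul_sub]
  rw [hsub.ediv_eq, ediv_sub (V := fun y => q y • gradient v y) (W := fun y => q y • gradient w y)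
    (hq.smul hv.differentiableAt_gradient) (hq.smul hw.differentiableAt_gradient)]

theorem fderiv_gradient_single_apply_nonpos_of_isLocalMax (hv : ContDiffAt ℝ 2 v x)
    (hmax : IsLocalMax v x) (i : Fin d) :
    fderiv ℝ (gradient v) x (EuclideanSpace.single i 1) i ≤ 0 := by
  set e : EuclideanSpace ℝ (Fin d) := EuclideanSpace.single i 1
  have hline : ∀ s : ℝ, HasDerivAt (fun s : ℝ => x + s • e) e s := fun s => by
    simpa using ((hasDerivAt_id s).smul_const e).const_add x
  have hline_tendsto : Tendsto (fun s : ℝ => x + s • e) (𝓝 0) (𝓝 x) := by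
    simpa using (hline 0).continuousAt.tendsto
  refine IsLocalMax.nonpos_of_hasDerivAt_deriv (x := 0) (g := fun s => v (x + s • e))
    (g' := fun s => gradient v (x + s • e) i) ?_ ?_ ?_
  · have hmax' : IsLocalMax v (x + (0 : ℝ) • e) := by simpa using hmax
    exact hmax'.comp_continuous (g := fun s : ℝ => x + s • e) (hline 0).continuousAt
  · filter_upwards [hline_tendsto.eventually (hv.eventually (by simp))] with s hs
    rw [← fderiv_single_eq_gradient_apply]
    exact (hs.differentiableAt (by simp)).hasFDerivAt.comp_hasDerivAt s (hline s)
  · have hG : HasFDerivAt (gradient v) (fderiv ℝ (gradient v) x) (x + (0 : ℝ) • e) := by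
      simpa using hv.differentiableAt_gradient.hasFDerivAt
    exact (EuclideanSpace.proj i).hasFDerivAt.comp_hasDerivAt 0 (hG.comp_hasDerivAt 0 (hline 0))

theorem ediv_smul_gradient_nonpos_of_isLocalMax (hq : DifferentiableAt ℝ q x) (hq0 : 0 ≤ q x)
    (hv : ContDiffAt ℝ 2 v x) (hmax : IsLocalMax v x) :
    ediv (fun y => q y • gradient v y) x ≤ 0 := by
  have hgrad : gradient v x = 0 := by simp [gradient, hmax.fderiv_eq_zero]
  rw [ediv_smul_of_eq_zero hq hv.differentiableAt_gradient hgrad]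
  exact mul_nonpos_of_nonneg_of_nonpos hq0 (Finset.sum_nonpos fun i _ =>
    fderiv_gradient_single_apply_nonpos_of_isLocalMax hv hmax i)

end Divergence

/-- `v ∈ C²,¹(Ω × (a, b]) ∩ C(Ω̄ × [a, b])`, with time derivative `vt`. -/
structure ParabolicRegular {d : ℕ} (Ω : Set (EuclideanSpace ℝ (Fin d))) (a b : ℝ)
    (v vt : ℝ → EuclideanSpace ℝ (Fin d) → ℝ) : Prop where
  contDiffAt : ∀ t ∈ Ioc a b, ∀ x ∈ Ω, ContDiffAt ℝ 2 (v t) x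
  continuousOn : ContinuousOn (fun p : ℝ × EuclideanSpace ℝ (Fin d) => v p.1 p.2)
    (Icc a b ×ˢ closure Ω)
  hasDerivWithinAt : ∀ t ∈ Ioc a b, ∀ x ∈ Ω,
    HasDerivWithinAt (fun s => v s x) (vt t x) (Icc a b) t

namespace ParabolicRegular

variable {d : ℕ} {Ω : Set (EuclideanSpace ℝ (Fin d))} {a b : ℝ}
  {v vt w wt : ℝ → EuclideanSpace ℝ (Fin d) → ℝ}

theorem sub (hv : ParabolicRegular Ω a b v vt) (hw : ParabolicRegular Ω a b w wt) :
    ParabolicRegular Ω a b (fun t x => v t x - w t x) (fun t x => vt t x - wt t x) where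
  contDiffAt t ht x hx := (hv.contDiffAt t ht x hx).sub (hw.contDiffAt t ht x hx)
  continuousOn := hv.continuousOn.sub hw.continuousOn
  hasDerivWithinAt t ht x hx := (hv.hasDerivWithinAt t ht x hx).sub (hw.hasDerivWithinAt t ht x hx)

theorem of_time {φ φ' : ℝ → ℝ} (hφ : ∀ t, HasDerivAt φ (φ' t) t) :
    ParabolicRegular Ω a b (fun t _ => φ t) (fun t _ => φ' t) where
  contDiffAt _ _ _ _ := contDiffAt_const
  continuousOn :=
    ((continuous_iff_continuousAt.2 fun t => (hφ t).continuousAt).comp continuous_fst).continuousOn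
  hasDerivWithinAt t _ _ _ := (hφ t).hasDerivWithinAt

theorem of_space {w : EuclideanSpace ℝ (Fin d) → ℝ} (hw : ∀ x ∈ Ω, ContDiffAt ℝ 2 w x)
    (hwc : ContinuousOn w (closure Ω)) :
    ParabolicRegular Ω a b (fun _ => w) (fun _ _ => 0) where
  contDiffAt _ _ := hw
  continuousOn := hwc.comp continuous_snd.continuousOn fun _ hp => hp.2
  hasDerivWithinAt _ _ _ _ := hasDerivWithinAt_const _ _ _

theorem mono_right (hv : ParabolicRegular Ω a b v vt) {b' : ℝ} (hb : b' ≤ b) :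
    ParabolicRegular Ω a b' v vt where
  contDiffAt t ht := hv.contDiffAt t ⟨ht.1, ht.2.trans hb⟩
  continuousOn := hv.continuousOn.mono (prod_mono (Icc_subset_Icc_right hb) subset_rfl)
  hasDerivWithinAt t ht x hx :=
    (hv.hasDerivWithinAt t ⟨ht.1, ht.2.trans hb⟩ x hx).mono (Icc_subset_Icc_right hb)

theorem comp_add_const (hv : ParabolicRegular Ω a b v vt) {h : ℝ} (hh : 0 ≤ h) :
    ParabolicRegular Ω a (b - h) (fun t => v (t + h)) (fun t => vt (t + h)) := by
  have hshift : MapsTo (· + h) (Icc a (b - h)) (Icc a b) := fun t ht =>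
    ⟨by linarith [ht.1], by linarith [ht.2]⟩
  have hshift' : ∀ t ∈ Ioc a (b - h), t + h ∈ Ioc a b := fun t ht =>
    ⟨by linarith [ht.1], by linarith [ht.2]⟩
  refine ⟨fun t ht => hv.contDiffAt _ (hshift' t ht), ?_, fun t ht x hx => ?_⟩
  · exact hv.continuousOn.comp
      (f := fun p : ℝ × EuclideanSpace ℝ (Fin d) => (p.1 + h, p.2)) (by fun_prop)
      fun p hp => ⟨hshift hp.1, hp.2⟩
  · simpa [Function.comp_def] using (hv.hasDerivWithinAt _ (hshift' t ht) x hx).scomp t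
      ((hasDerivWithinAt_id t _).add_const h) hshift

theorem eq_zero_of_mem_frontier (hv : ParabolicRegular Ω a b v vt) (hab : a < b)
    (hbc : ∀ t ∈ Ioc a b, ∀ x ∈ frontier Ω, v t x = 0) :
    ∀ t ∈ Icc a b, ∀ x ∈ frontier Ω, v t x = 0 := by
  intro t ht x hx
  have hcont : ContinuousOn (fun s => v s x) (Icc a b) :=
    hv.continuousOn.comp (f := fun s => (s, x)) (by fun_prop)
      fun s hs => ⟨hs, frontier_subset_closure hx⟩
  refine EqOn.of_subset_closure (fun s hs => hbc s hs x hx) hcont continuousOn_const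
    Ioc_subset_Icc_self (by rw [closure_Ioc hab.ne]) ht

end ParabolicRegular

section MaximumPrinciple

variable {d : ℕ} {Ω : Set (EuclideanSpace ℝ (Fin d))} {q : EuclideanSpace ℝ (Fin d) → ℝ} {a b : ℝ}
  {v vt w wt : ℝ → EuclideanSpace ℝ (Fin d) → ℝ}

theorem nonpos_of_parabolic_strict_subsolution (hΩ : IsOpen Ω) (hΩb : Bornology.IsBounded Ω)
    (hq : ∀ x ∈ Ω, DifferentiableAt ℝ q x) (hq0 : ∀ x ∈ Ω, 0 ≤ q x)
    (hv : ParabolicRegular Ω a b v vt)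
    (hsub : ∀ t ∈ Ioc a b, ∀ x ∈ Ω, vt t x - ediv (fun y => q y • gradient (v t) y) x < 0)
    (hbdry : ∀ t ∈ Ioc a b, ∀ x ∈ frontier Ω, v t x ≤ 0) (hinit : ∀ x ∈ closure Ω, v a x ≤ 0) :
    ∀ t ∈ Icc a b, ∀ x ∈ closure Ω, v t x ≤ 0 := by
  intro t ht x hx
  obtain ⟨⟨t₀, x₀⟩, ⟨ht₀, hx₀⟩, hmax⟩ := (isCompact_Icc.prod hΩb.isCompact_closure).exists_isMaxOn
    ⟨(t, x), ht, hx⟩ hv.continuousOn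
  refine le_trans (hmax (mk_mem_prod ht hx)) (not_lt.1 fun hpos => ?_)
  have ht₀' : t₀ ∈ Ioc a b := ⟨lt_of_le_of_ne ht₀.1 fun h => by
    subst h; exact (hinit x₀ hx₀).not_gt hpos, ht₀.2⟩
  have hx₀' : x₀ ∈ Ω := by
    rw [← hΩ.interior_eq, ← closure_sdiff_frontier]
    exact ⟨hx₀, fun hfr => (hbdry t₀ ht₀' x₀ hfr).not_gt hpos⟩
  have htime : 0 ≤ vt t₀ x₀ := (hv.hasDerivWithinAt t₀ ht₀' x₀ hx₀').nonneg_of_isLocalMaxOn_Icc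
    (IsMaxOn.localize fun s hs => hmax (mk_mem_prod hs hx₀)) ht₀'
  have hspace : IsLocalMax (v t₀) x₀ :=
    mem_of_superset (hΩ.mem_nhds hx₀') fun y hy => hmax (mk_mem_prod ht₀ (subset_closure hy))
  linarith [hsub t₀ ht₀' x₀ hx₀', ediv_smul_gradient_nonpos_of_isLocalMax (hq x₀ hx₀')
    (hq0 x₀ hx₀') (hv.contDiffAt t₀ ht₀' x₀ hx₀') hspace]

theorem le_of_parabolic_comparison (hΩ : IsOpen Ω) (hΩb : Bornology.IsBounded Ω)
    (hq : ∀ x ∈ Ω, DifferentiableAt ℝ q x) (hq0 : ∀ x ∈ Ω, 0 ≤ q x)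
    (hv : ParabolicRegular Ω a b v vt) (hw : ParabolicRegular Ω a b w wt)
    (hL : ∀ t ∈ Ioc a b, ∀ x ∈ Ω, vt t x - ediv (fun y => q y • gradient (v t) y) x ≤
      wt t x - ediv (fun y => q y • gradient (w t) y) x)
    (hbdry : ∀ t ∈ Ioc a b, ∀ x ∈ frontier Ω, v t x ≤ w t x)
    (hinit : ∀ x ∈ closure Ω, v a x ≤ w a x) :
    ∀ t ∈ Icc a b, ∀ x ∈ closure Ω, v t x ≤ w t x := by
  have hperturbed : ∀ ε > 0, ∀ t ∈ Icc a b, ∀ x ∈ closure Ω,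
      v t x - w t x - ε * (t - a) ≤ 0 := by
    intro ε hε
    have hφ : ∀ t, HasDerivAt (fun t => ε * (t - a)) ε t := fun t => by
      simpa using ((hasDerivAt_id t).sub_const a).const_mul ε
    refine nonpos_of_parabolic_strict_subsolution hΩ hΩb hq hq0
      ((hv.sub hw).sub (.of_time hφ)) (fun t ht x hx => ?_) (fun t ht x hx => ?_) (fun x hx => ?_)
    · rw [gradient_sub_const, ediv_smul_gradient_sub (hq x hx) (hv.contDiffAt t ht x hx)
        (hw.contDiffAt t ht x hx)]
      linarith [hL t ht x hx]
    · nlinarith [hbdry t ht x hx, ht.1]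
    · simpa using hinit x hx
  intro t ht x hx
  have hlim : Tendsto (fun ε : ℝ => ε * (t - a)) (𝓝[>] 0) (𝓝 0) := by
    simpa using (tendsto_id.mul_const (t - a)).mono_left (nhdsWithin_le_nhds (a := (0 : ℝ)))
  refine sub_nonpos.1 (ge_of_tendsto hlim ?_)
  filter_upwards [self_mem_nhdsWithin] with ε hε
  linarith [hperturbed ε hε t ht x hx]

theorem nonneg_of_parabolic_supersolution (hΩ : IsOpen Ω) (hΩb : Bornology.IsBounded Ω)
    (hq : ∀ x ∈ Ω, DifferentiableAt ℝ q x) (hq0 : ∀ x ∈ Ω, 0 ≤ q x)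
    (hv : ParabolicRegular Ω a b v vt)
    (hsup : ∀ t ∈ Ioc a b, ∀ x ∈ Ω, 0 ≤ vt t x - ediv (fun y => q y • gradient (v t) y) x)
    (hbdry : ∀ t ∈ Ioc a b, ∀ x ∈ frontier Ω, 0 ≤ v t x) (hinit : ∀ x ∈ closure Ω, 0 ≤ v a x) :
    ∀ t ∈ Icc a b, ∀ x ∈ closure Ω, 0 ≤ v t x := by
  refine le_of_parabolic_comparison hΩ hΩb hq hq0
    (.of_space (w := fun _ => 0) (fun _ _ => contDiffAt_const) continuousOn_const) hv
    (fun t ht x hx => ?_) hbdry hinit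
  simpa only [gradient_fun_const, smul_zero, ediv_const, sub_zero] using hsup t ht x hx

theorem antitoneOn_of_parabolic {u ut f : ℝ → EuclideanSpace ℝ (Fin d) → ℝ}
    {u₀ : EuclideanSpace ℝ (Fin d) → ℝ} (hΩ : IsOpen Ω) (hΩb : Bornology.IsBounded Ω)
    (hq : ∀ x ∈ Ω, DifferentiableAt ℝ q x) (hq0 : ∀ x ∈ Ω, 0 ≤ q x)
    (hu : ParabolicRegular Ω a b u ut)
    (hpde : ∀ t ∈ Ioc a b, ∀ x ∈ Ω, ut t x - ediv (fun y => q y • gradient (u t) y) x = f t x)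
    (hbc : ∀ t ∈ Ioc a b, ∀ x ∈ frontier Ω, u t x = 0) (hic : ∀ x ∈ closure Ω, u a x = u₀ x)
    (hu₀ : ∀ x ∈ Ω, ContDiffAt ℝ 2 u₀ x) (hu₀c : ContinuousOn u₀ (closure Ω))
    (hu₀_bdry : ∀ x ∈ frontier Ω, 0 ≤ u₀ x)
    (hf : ∀ x ∈ Ω, AntitoneOn (fun t => f t x) (Icc a b))
    (hcomp : ∀ x ∈ Ω, f a x + ediv (fun y => q y • gradient u₀ y) x ≤ 0)
    {x : EuclideanSpace ℝ (Fin d)} (hx : x ∈ closure Ω) :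
    AntitoneOn (fun t => u t x) (Icc a b) := by
  have hle_init : ∀ t ∈ Icc a b, ∀ x ∈ closure Ω, u t x ≤ u a x := by
    intro t ht x hx
    rw [hic x hx]
    refine le_of_parabolic_comparison hΩ hΩb hq hq0 hu (.of_space hu₀ hu₀c)
      (fun t ht x hx => ?_) (fun t ht x hx => ?_) (fun x hx => (hic x hx).le) t ht x hx
    · have hft : f t x ≤ f a x := hf x hx ⟨le_rfl, ht.1.le.trans ht.2⟩ (Ioc_subset_Icc_self ht)
        ht.1.le
      linarith [hpde t ht x hx, hcomp x hx]
    · rw [hbc t ht x hx]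
      exact hu₀_bdry x hx
  intro t₁ ht₁ t₂ ht₂ h12
  obtain ⟨h, hh, rfl⟩ : ∃ h, 0 ≤ h ∧ t₂ = t₁ + h := ⟨t₂ - t₁, sub_nonneg.2 h12, by ring⟩
  have hshift : ∀ t ∈ Ioc a (b - h), t ∈ Ioc a b ∧ t + h ∈ Ioc a b := fun t ht =>
    ⟨⟨ht.1, by linarith [ht.2]⟩, ⟨by linarith [ht.1], by linarith [ht.2]⟩⟩
  refine le_of_parabolic_comparison hΩ hΩb hq hq0 (hu.comp_add_const hh)
    (hu.mono_right (by linarith)) (fun t ht y hy => ?_) (fun t ht y hy => ?_) (fun y hy => ?_)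
    t₁ ⟨ht₁.1, by linarith [ht₂.2]⟩ x hx
  · obtain ⟨ht, hth⟩ := hshift t ht
    rw [hpde t ht y hy, hpde (t + h) hth y hy]
    exact hf y hy (Ioc_subset_Icc_self ht) (Ioc_subset_Icc_self hth) (by linarith)
  · obtain ⟨ht, hth⟩ := hshift t ht
    rw [hbc t ht y hy, hbc (t + h) hth y hy]
  · exact hle_init (a + h) ⟨by linarith, by linarith [ht₁.1, ht₂.2]⟩ y hy

end MaximumPrinciple

theorem parabolic_positivity_general
    {d : ℕ} (Ω : Set (EuclideanSpace ℝ (Fin d)))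
    (hΩ : IsOpen Ω) (hΩb : Bornology.IsBounded Ω)
    (T c₀ cf : ℝ) (hT : 0 < T) (hc₀ : 0 < c₀) (hcf : 0 < cf)
    (q u₀ : EuclideanSpace ℝ (Fin d) → ℝ)
    (u ut f ft : ℝ → EuclideanSpace ℝ (Fin d) → ℝ)
    -- `q ∈ C¹(Ω̄)` with `q ≥ c₀ > 0`
    (hq : ContDiffOn ℝ 1 q (closure Ω))
    (hqpos : ∀ x ∈ closure Ω, c₀ ≤ q x)
    -- regularity of `u`: `C([0,T]; C²(Ω̄)) ∩ C¹((0,T]; C(Ω̄))`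
    (hureg : ∀ t ∈ Icc (0:ℝ) T, ContDiffOn ℝ 2 (u t) (closure Ω))
    (hucont : ContinuousOn (fun p : ℝ × EuclideanSpace ℝ (Fin d) => u p.1 p.2)
      (Icc 0 T ×ˢ closure Ω))
    (hut : ∀ x ∈ closure Ω, ∀ t ∈ Icc (0:ℝ) T,
      HasDerivWithinAt (fun s => u s x) (ut t x) (Icc 0 T) t)
    -- regularity of `f` and its time derivative `ft`
    (hft : ∀ x ∈ closure Ω, ∀ t ∈ Icc (0:ℝ) T,
      HasDerivWithinAt (fun s => f s x) (ft t x) (Icc 0 T) t)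
    -- the parabolic equation `∂_t u − div(q∇u) = f` in `Ω × (0,T]`
    (hpde : ∀ t ∈ Ioc (0:ℝ) T, ∀ x ∈ Ω,
      ut t x - ediv (fun y => q y • gradient (u t) y) x = f t x)
    -- homogeneous Dirichlet boundary condition on `∂Ω × (0,T]`
    (hbc : ∀ t ∈ Ioc (0:ℝ) T, ∀ x ∈ frontier Ω, u t x = 0)
    -- initial condition
    (hic : ∀ x ∈ closure Ω, u 0 x = u₀ x)
    -- sign conditions on the data
    (hf : ∀ t ∈ Ioc (0:ℝ) T, ∀ x ∈ Ω, cf ≤ f t x)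
    (hftneg : ∀ t ∈ Ioc (0:ℝ) T, ∀ x ∈ Ω, ft t x ≤ 0)
    (hu₀reg : ContDiffOn ℝ 2 u₀ (closure Ω))
    (hu₀pos : ∀ x ∈ Ω, 0 ≤ u₀ x)
    (hcomp : ∀ x ∈ Ω, f 0 x + ediv (fun y => q y • gradient u₀ y) x ≤ 0) :
    ∀ t ∈ Icc (0:ℝ) T, ∀ x ∈ closure Ω,
      0 ≤ u t x ∧ ut t x ≤ 0 ∧
      min c₀ cf * (‖gradient (u t) x‖ ^ 2 + u t x)
        ≤ q x * ‖gradient (u t) x‖ ^ 2 + (f t x - ut t x) * u t x := by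
  have hΩnhds : ∀ x ∈ Ω, closure Ω ∈ 𝓝 x := fun x hx =>
    mem_of_superset (hΩ.mem_nhds hx) subset_closure
  have hqd : ∀ x ∈ Ω, DifferentiableAt ℝ q x := fun x hx =>
    (hq.contDiffAt (hΩnhds x hx)).differentiableAt one_ne_zero
  have hq0 : ∀ x ∈ Ω, 0 ≤ q x := fun x hx => hc₀.le.trans (hqpos x (subset_closure hx))
  have hu : ParabolicRegular Ω 0 T u ut := ⟨fun t ht x hx =>
    (hureg t (Ioc_subset_Icc_self ht)).contDiffAt (hΩnhds x hx), hucont,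
    fun t ht x hx => hut x (subset_closure hx) t (Ioc_subset_Icc_self ht)⟩
  have hu₀_nonneg : ∀ x ∈ closure Ω, 0 ≤ u₀ x := fun x hx =>
    continuousWithinAt_const.closure_le hx ((hu₀reg.continuousOn x hx).mono subset_closure) hu₀pos
  have hf_anti : ∀ x ∈ Ω, AntitoneOn (fun t => f t x) (Icc 0 T) := fun x hx =>
    antitoneOn_Icc_of_hasDerivWithinAt_nonpos (hft x (subset_closure hx)) fun t ht =>
      hftneg t ht x hx
  intro t ht x hx
  have hu_nonneg : 0 ≤ u t x := nonneg_of_parabolic_supersolution hΩ hΩb hqd hq0 hu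
    (fun t ht x hx => hpde t ht x hx ▸ hcf.le.trans (hf t ht x hx))
    (fun t ht x hx => (hbc t ht x hx).ge) (fun x hx => hic x hx ▸ hu₀_nonneg x hx) t ht x hx
  have hut_nonpos : ut t x ≤ 0 := (hut x hx t ht).nonpos_of_antitoneOn
    (uniqueDiffOn_Icc hT t ht).accPt
    (antitoneOn_of_parabolic hΩ hΩb hqd hq0 hu hpde hbc hic
      (fun x hx => hu₀reg.contDiffAt (hΩnhds x hx)) hu₀reg.continuousOn
      (fun x hx => hu₀_nonneg x (frontier_subset_closure hx)) hf_anti hcomp hx)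
  -- `f ≥ c_f` is only known inside `Ω`; on `∂Ω` we use `u = 0`, at `t = 0` by continuity.
  have hfu : cf * u t x ≤ (f t x - ut t x) * u t x := by
    by_cases hxΩ : x ∈ Ω
    · refine mul_le_mul_of_nonneg_right ?_ hu_nonneg
      linarith [hf T ⟨hT, le_rfl⟩ x hxΩ, hf_anti x hxΩ ht ⟨hT.le, le_rfl⟩ ht.2]
    · rw [hu.eq_zero_of_mem_frontier hT hbc t ht x ⟨hx, by rwa [hΩ.interior_eq]⟩]
      simp
  refine ⟨hu_nonneg, hut_nonpos, ?_⟩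
  nlinarith [min_le_left c₀ cf, min_le_right c₀ cf, hqpos x hx, sq_nonneg ‖gradient (u t) x‖]

/-- Maximum-principle part of Proposition 4.8: under the sign conditions
`f ≥ c_f > 0`, `∂_t f ≤ 0`, `u₀ ≥ 0`, `f(·,0) + div(q∇u₀) ≤ 0`, the solution of
`∂_t u − div(q∇u) = f` with homogeneous Dirichlet data satisfies `u ≥ 0`,
`∂_t u ≤ 0`, and hence
`q|∇u|² + (f − ∂_t u) u ≥ min(c₀, c_f)(|∇u|² + u)` on `Ω̄ × [0,T]`. -/
theorem parabolic_positivity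
    {d : ℕ} (Ω : Set (EuclideanSpace ℝ (Fin d)))
    (hΩ : IsOpen Ω) (hΩb : Bornology.IsBounded Ω)
    (T c₀ cf : ℝ) (hT : 0 < T) (hc₀ : 0 < c₀) (hcf : 0 < cf)
    (q u₀ : EuclideanSpace ℝ (Fin d) → ℝ)
    (u ut f ft : ℝ → EuclideanSpace ℝ (Fin d) → ℝ)
    -- `q ∈ C¹(Ω̄)` with `q ≥ c₀ > 0`
    (hq : ContDiffOn ℝ 1 q (closure Ω))
    (hqpos : ∀ x ∈ closure Ω, c₀ ≤ q x)
    -- regularity of `u`: `C([0,T]; C²(Ω̄)) ∩ C¹((0,T]; C(Ω̄))`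
    (hureg : ∀ t ∈ Icc (0:ℝ) T, ContDiffOn ℝ 2 (u t) (closure Ω))
    (hucont : ContinuousOn (fun p : ℝ × EuclideanSpace ℝ (Fin d) => u p.1 p.2)
      (Icc 0 T ×ˢ closure Ω))
    (hut : ∀ x ∈ closure Ω, ∀ t ∈ Icc (0:ℝ) T,
      HasDerivWithinAt (fun s => u s x) (ut t x) (Icc 0 T) t)
    (hutcont : ContinuousOn (fun p : ℝ × EuclideanSpace ℝ (Fin d) => ut p.1 p.2)
      (Icc 0 T ×ˢ closure Ω))
    -- regularity of `f` and its time derivative `ft`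
    (hft : ∀ x ∈ closure Ω, ∀ t ∈ Icc (0:ℝ) T,
      HasDerivWithinAt (fun s => f s x) (ft t x) (Icc 0 T) t)
    -- the parabolic equation `∂_t u − div(q∇u) = f` in `Ω × (0,T]`
    (hpde : ∀ t ∈ Ioc (0:ℝ) T, ∀ x ∈ Ω,
      ut t x - ediv (fun y => q y • gradient (u t) y) x = f t x)
    -- homogeneous Dirichlet boundary condition on `∂Ω × (0,T]`
    (hbc : ∀ t ∈ Ioc (0:ℝ) T, ∀ x ∈ frontier Ω, u t x = 0)
    -- initial condition
    (hic : ∀ x ∈ closure Ω, u 0 x = u₀ x)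
    -- sign conditions on the data
    (hf : ∀ t ∈ Ioc (0:ℝ) T, ∀ x ∈ Ω, cf ≤ f t x)
    (hftneg : ∀ t ∈ Ioc (0:ℝ) T, ∀ x ∈ Ω, ft t x ≤ 0)
    (hu₀reg : ContDiffOn ℝ 2 u₀ (closure Ω))
    (hu₀pos : ∀ x ∈ Ω, 0 ≤ u₀ x)
    (hcomp : ∀ x ∈ Ω, f 0 x + ediv (fun y => q y • gradient u₀ y) x ≤ 0) :
    ∀ t ∈ Icc (0:ℝ) T, ∀ x ∈ closure Ω,
      0 ≤ u t x ∧ ut t x ≤ 0 ∧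
      min c₀ cf * (‖gradient (u t) x‖ ^ 2 + u t x)
        ≤ q x * ‖gradient (u t) x‖ ^ 2 + (f t x - ut t x) * u t x :=
  parabolic_positivity_general Ω hΩ hΩb T c₀ cf hT hc₀ hcf q u₀ u ut f ft hq hqpos hureg hucont hut
    hft hpde hbc hic hf hftneg hu₀reg hu₀pos hcomp
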